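/- Let C be a category, x an object of C, D : (Over x)ᵒᵖ ⥤ Cat a functor on the opposite of the slice category over x, and d an object of the category D(op (Over.mk (𝟙 x))). Then there exists a functor s : (Over x)ᵒᵖ ⥤ Grothendieck D such that s composed with the forgetful functor Grothendieck D ⥤ (Over x)ᵒᵖ equals the identity functor of (Over x)ᵒᵖ, and such that the fiber component of s at the object op (Over.mk (𝟙 x)) is d. This interprets the left hom elimination and computation rules in the empty context. -/

import Mathlib

/-!
`Over.mk (𝟙 x)` is terminal in `Over x`, so its opposite `i` is initial in `(Over x)ᵒᵖ`.
Transporting `d` along the unique maps `i ⟶ u` gives fiber objects that every transition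
functor `D.map g` carries strictly onto one another (functoriality of `D` plus uniqueness of
maps out of `i`), and such a strictly compatible family is exactly a section of
`Grothendieck D ⥤ (Over x)ᵒᵖ`; at `i` it returns `d`.
-/

open CategoryTheory

universe v₂ u₂ v u

namespace CategoryTheory.Grothendieck

variable {J : Type*} [Category J] {D : J ⥤ Cat.{v₂, u₂}}

def sectionOfCompatible (θ : ∀ u, D.obj u)
    (hθ : ∀ {u u' : J} (g : u ⟶ u'), (D.map g).toFunctor.obj (θ u) = θ u') :
    J ⥤ Grothendieck D where
  obj u := ⟨u, θ u⟩
  map g := ⟨g, eqToHom (hθ g)⟩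
  map_id _ := Grothendieck.ext _ _ rfl <| by
    dsimp only
    rw [id_fiber, eqToHom_trans]
  map_comp _ _ := Grothendieck.ext _ _ rfl <| by
    dsimp only
    rw [comp_fiber, eqToHom_map, eqToHom_trans, eqToHom_trans, eqToHom_trans]

theorem sectionOfCompatible_comp_forget (θ : ∀ u, D.obj u)
    (hθ : ∀ {u u' : J} (g : u ⟶ u'), (D.map g).toFunctor.obj (θ u) = θ u') :
    sectionOfCompatible θ hθ ⋙ forget D = 𝟭 J :=
  rfl

theorem map_obj_map_to_obj {i : J} (hi : Limits.IsInitial i) (d : D.obj i) {u u' : J}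
    (g : u ⟶ u') :
    (D.map g).toFunctor.obj ((D.map (hi.to u)).toFunctor.obj d) =
      (D.map (hi.to u')).toFunctor.obj d := by
  rw [← hi.to_comp g, D.map_comp]
  rfl

def sectionOfIsInitial {i : J} (hi : Limits.IsInitial i) (d : D.obj i) : J ⥤ Grothendieck D :=
  sectionOfCompatible (fun u => (D.map (hi.to u)).toFunctor.obj d) (map_obj_map_to_obj hi d)

theorem sectionOfIsInitial_comp_forget {i : J} (hi : Limits.IsInitial i) (d : D.obj i) :
    sectionOfIsInitial hi d ⋙ forget D = 𝟭 J :=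
  sectionOfCompatible_comp_forget _ _

theorem sectionOfIsInitial_obj_self {i : J} (hi : Limits.IsInitial i) (d : D.obj i) :
    (sectionOfIsInitial hi d).obj i = ⟨i, d⟩ := by
  change (⟨i, (D.map (hi.to i)).toFunctor.obj d⟩ : Grothendieck D) = _
  rw [hi.to_self, D.map_id]
  rfl

end CategoryTheory.Grothendieck

/-- for `D : (Over x)ᵒᵖ ⥤ Cat` and an object `d` of the fiber over
`op (Over.mk (𝟙 x))`, there is a section `s` of the forgetful functor
`Grothendieck D ⥤ (Over x)ᵒᵖ` whose fiber component at `op (Over.mk (𝟙 x))` is `d`.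
(Left hom elimination and computation in the empty context.) -/
theorem left_hom_elim_computation {C : Type u} [Category.{v} C] (x : C)
    (D : (Over x)ᵒᵖ ⥤ Cat.{v₂, u₂}) (d : D.obj (Opposite.op (Over.mk (𝟙 x)))) :
    ∃ s : (Over x)ᵒᵖ ⥤ Grothendieck D,
      s ⋙ Grothendieck.forget D = 𝟭 (Over x)ᵒᵖ ∧
      s.obj (Opposite.op (Over.mk (𝟙 x))) =
        ({ base := Opposite.op (Over.mk (𝟙 x)), fiber := d } : Grothendieck D) :=
  let hi := (Over.mkIdTerminal (X := x)).op
  ⟨Grothendieck.sectionOfIsInitial hi d, Grothendieck.sectionOfIsInitial_comp_forget hi d,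
    Grothendieck.sectionOfIsInitial_obj_self hi d⟩
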